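/- Write q(b₀,b₁,b₂,b₃,b₄)(x,y) = Σ_{i=0}^4 C(4,i)·b_i·x^{4-i}y^i. An element p of the cone (Σ_{2,4}^2)* is extremal (that is, p ≠ 0 and whenever p = q₁ + q₂ with q₁, q₂ ∈ (Σ_{2,4}^2)*, both q₁ and q₂ are nonnegative scalar multiples of p) if and only if p is a positive multiple of x⁴, of y⁴, or of q(r², ε₁·r·t, t², ε₂·s·t, s²)(x,y) for some reals r > 0, s > 0, 0 < t ≤ √(rs), and signs ε₁, ε₂ ∈ {+1, −1}. -/

import Mathlib

/-!
Write a quartic as `q(v)`. For `h = a x² + b xy + c y²` the Fischer product `[q(v), h²]` is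
the quadratic form `v₀a² + 2v₁ab + v₂(b² + 2ac) + 2v₃bc + v₄c²`, so testing against squares
of binomials says exactly that the three `2 × 2` principal submatrices of the Hankel matrix
`(v_{i+j})` are positive semidefinite. In that cone an extreme ray with `v₂ = 0` is `x⁴` or
`y⁴`. If `v₂ > 0` and `v₁² < v₀v₂`, then `v₁` can be moved both ways inside the cone, so
extremality forces `v₁² = v₀v₂`, and likewise `v₃² = v₂v₄`; this is the parametrisation by
`r, s, t`. Conversely, two positive semidefinite `2 × 2` matrices with a singular sum are both
proportional to it, so every decomposition of such a `v` is into multiples of `v`.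
-/

open MvPolynomial Finset

/-- The Fischer inner product of two binary quartic forms (`n = 2`, `2d = 4`). -/
noncomputable def fischer4 (p q : MvPolynomial (Fin 2) ℝ) : ℝ :=
  ∑ i ∈ p.support ∪ q.support,
    (((∏ j, Nat.factorial (i j) : ℕ) : ℝ) / (Nat.factorial 4 : ℝ)) *
      coeff i p * coeff i q

/-- The dual cone `(Σ_{2,4}^2)*` of binary quartic forms. -/
def DualSigma24_2 : Set (MvPolynomial (Fin 2) ℝ) :=
  { p | p.IsHomogeneous 4 ∧
      ∀ h : MvPolynomial (Fin 2) ℝ, h.IsHomogeneous 2 → h.support.card ≤ 2 →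
        0 ≤ fischer4 p (h ^ 2) }

/-- `q(b₀,…,b₄)(x,y) = Σ_{i=0}^4 C(4,i)·b_i·x^{4-i}·y^i`. -/
noncomputable def qform (b : Fin 5 → ℝ) : MvPolynomial (Fin 2) ℝ :=
  ∑ i : Fin 5, C ((Nat.choose 4 (i : ℕ) : ℝ) * b i) * X 0 ^ (4 - (i : ℕ)) * X 1 ^ (i : ℕ)

def IsExtremeRay (R : Type*) {M : Type*} [Semiring R] [PartialOrder R] [AddCommMonoid M]
    [Module R M] (S : Set M) (v : M) : Prop :=
  v ≠ 0 ∧ ∀ a b : M, a ∈ S → b ∈ S → v = a + b →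
    (∃ c : R, 0 ≤ c ∧ a = c • v) ∧ (∃ c : R, 0 ≤ c ∧ b = c • v)

section IsExtremeRay

variable {R M N : Type*} [Semiring R] [PartialOrder R] [AddCommMonoid M] [Module R M]
  [AddCommMonoid N] [Module R N] {S : Set M} {v : M}

lemma isExtremeRay_of_forall_left (hv : v ≠ 0)
    (h : ∀ a b : M, a ∈ S → b ∈ S → v = a + b → ∃ c : R, 0 ≤ c ∧ a = c • v) :
    IsExtremeRay R S v :=
  ⟨hv, fun a b ha hb hab => ⟨h a b ha hb hab, h b a hb ha (hab.trans (add_comm a b))⟩⟩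

lemma LinearMap.isExtremeRay_apply_iff (f : M →ₗ[R] N) (hf : Function.Injective f)
    {T : Set N} (hT : T ⊆ Set.range f) :
    IsExtremeRay R T (f v) ↔ IsExtremeRay R (f ⁻¹' T) v := by
  refine ⟨fun ⟨hv, H⟩ => ⟨fun h => hv (by rw [h, map_zero]), fun a b ha hb hab => ?_⟩,
    fun ⟨hv, H⟩ => ⟨(map_ne_zero_iff f hf).mpr hv, fun a b ha hb hab => ?_⟩⟩
  · obtain ⟨⟨c, hc, hac⟩, ⟨d, hd, hbd⟩⟩ := H (f a) (f b) ha hb (by rw [hab, map_add])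
    exact ⟨⟨c, hc, hf (by rw [hac, map_smul])⟩, ⟨d, hd, hf (by rw [hbd, map_smul])⟩⟩
  · obtain ⟨a, rfl⟩ := hT ha
    obtain ⟨b, rfl⟩ := hT hb
    obtain ⟨⟨c, hc, hac⟩, ⟨d, hd, hbd⟩⟩ := H a b ha hb (hf (by rw [hab, map_add]))
    exact ⟨⟨c, hc, by rw [hac, map_smul]⟩, ⟨d, hd, by rw [hbd, map_smul]⟩⟩

end IsExtremeRay

section OrderedField

variable {K : Type*} [Field K] [LinearOrder K] [IsStrictOrderedRing K]

lemma IsExtremeRay.exists_eq_smul_of_add_mem_of_sub_mem {M : Type*} [AddCommGroup M]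
    [Module K M] {S : Set M} {v w : M} (hv : IsExtremeRay K S v)
    (hS : ∀ c : K, 0 ≤ c → ∀ x ∈ S, c • x ∈ S) (hadd : v + w ∈ S) (hsub : v - w ∈ S) :
    ∃ k : K, w = k • v := by
  obtain ⟨⟨c, -, hc⟩, -⟩ :=
    hv.2 _ _ (hS 2⁻¹ (by norm_num) _ hadd) (hS 2⁻¹ (by norm_num) _ hsub) (by module)
  exact ⟨2 * c - 1, by linear_combination (norm := module) (2 : K) • hc⟩

lemma isExtremeRay_of_forall_mul_eq {ι : Type*} {S : Set (ι → K)} {v : ι → K} (j : ι)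
    (hj : 0 < v j) (hS : ∀ a ∈ S, 0 ≤ a j)
    (h : ∀ a b, a ∈ S → b ∈ S → v = a + b → ∀ i, a i * v j = a j * v i) :
    IsExtremeRay K S v :=
  isExtremeRay_of_forall_left (fun h0 => hj.ne' (by simp [h0])) fun a b ha hb hab =>
    ⟨a j / v j, div_nonneg (hS a ha) hj.le, funext fun i => by
      rw [Pi.smul_apply, smul_eq_mul, div_mul_eq_mul_div, eq_div_iff hj.ne', h a b ha hb hab i]⟩

end OrderedField

lemma exists_sign_mul_of_sq_eq_sq {x y : ℝ} (h : x ^ 2 = y ^ 2) :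
    ∃ ε : ℝ, (ε = 1 ∨ ε = -1) ∧ x = ε * y := by
  rcases sq_eq_sq_iff_eq_or_eq_neg.mp h with h | h
  · exact ⟨1, Or.inl rfl, by rw [h, one_mul]⟩
  · exact ⟨-1, Or.inr rfl, by rw [h, neg_one_mul]⟩

lemma exists_pos_sq_le_of_sq_lt {x A : ℝ} (h : x ^ 2 < A) :
    ∃ δ > 0, (x + δ) ^ 2 ≤ A ∧ (x - δ) ^ 2 ≤ A := by
  have hlt : |x| < √A := Real.lt_sqrt_of_sq_lt (by rwa [sq_abs])
  have hA : √A ^ 2 = A := Real.sq_sqrt ((sq_nonneg x).trans h.le)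
  refine ⟨√A - |x|, by linarith, ?_, ?_⟩ <;>
    exact (sq_le_sq' (by linarith [le_abs_self x, neg_abs_le x])
      (by linarith [le_abs_self x, neg_abs_le x])).trans_eq hA

lemma forall_quadratic_nonneg_iff {x y z : ℝ} :
    (∀ a b : ℝ, 0 ≤ x * a ^ 2 + 2 * y * a * b + z * b ^ 2) ↔
      0 ≤ x ∧ 0 ≤ z ∧ y ^ 2 ≤ x * z := by
  refine ⟨fun h => ⟨by simpa using h 1 0, by simpa using h 0 1, ?_⟩,
    fun ⟨hx, hz, hyz⟩ a b => ?_⟩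
  · have := discrim_le_zero fun a => (h a 1).trans_eq (by ring : _ = x * (a * a) + 2 * y * a + z)
    rw [discrim] at this
    linarith
  · rcases hx.eq_or_lt with rfl | hx
    · obtain rfl : y = 0 := by nlinarith
      nlinarith
    · nlinarith [sq_nonneg (x * a + y * b), mul_nonneg hz (sq_nonneg b)]

lemma proportional_of_psd_of_add_singular {a₀ a₁ a₂ b₀ b₁ b₂ : ℝ} (ha₀ : 0 ≤ a₀)
    (ha₂ : 0 ≤ a₂) (hb₀ : 0 ≤ b₀) (hb₂ : 0 ≤ b₂) (ha : a₁ ^ 2 ≤ a₀ * a₂)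
    (hb : b₁ ^ 2 ≤ b₀ * b₂) (hab : (a₁ + b₁) ^ 2 = (a₀ + b₀) * (a₂ + b₂)) :
    a₀ * b₂ = a₂ * b₀ ∧ a₁ * b₂ = a₂ * b₁ := by
  -- `det (A + B) = det A + det B + (a₀b₂ + a₂b₀ - 2a₁b₁)`, a sum of three nonnegative terms.
  have hcross : 2 * a₁ * b₁ ≤ a₀ * b₂ + a₂ * b₀ := by
    have : (a₁ * b₁) ^ 2 ≤ (a₀ * b₂) * (a₂ * b₀) := by
      rw [mul_pow]; nlinarith [mul_le_mul ha hb (sq_nonneg _) (mul_nonneg ha₀ ha₂)]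
    nlinarith [sq_nonneg (a₀ * b₂ - a₂ * b₀), mul_nonneg ha₀ hb₂, mul_nonneg ha₂ hb₀]
  have hA : a₁ ^ 2 = a₀ * a₂ := by nlinarith
  have hB : b₁ ^ 2 = b₀ * b₂ := by nlinarith
  have hC : 2 * a₁ * b₁ = a₀ * b₂ + a₂ * b₀ := by nlinarith
  constructor
  · refine sub_eq_zero.mp (pow_eq_zero_iff two_ne_zero |>.mp ?_)
    linear_combination
      -(a₀ * b₂ + a₂ * b₀ + 2 * a₁ * b₁) * hC + 4 * b₁ ^ 2 * hA + 4 * a₀ * a₂ * hB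
  · refine sub_eq_zero.mp (pow_eq_zero_iff two_ne_zero |>.mp ?_)
    linear_combination b₂ ^ 2 * hA + a₂ ^ 2 * hB - a₂ * b₂ * hC

noncomputable def degExp (n : ℕ) (i : Fin (n + 1)) : Fin 2 →₀ ℕ :=
  Finsupp.single (0 : Fin 2) (n - i : ℕ) + Finsupp.single 1 (i : ℕ)

section Exponents

variable {n : ℕ}

@[simp] lemma degExp_apply_zero (i : Fin (n + 1)) : degExp n i 0 = n - i := by simp [degExp]

@[simp] lemma degExp_apply_one (i : Fin (n + 1)) : degExp n i 1 = i := by simp [degExp]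

lemma degExp_injective (n : ℕ) : Function.Injective (degExp n) := fun i j h =>
  Fin.ext <| by simpa using congr($h 1)

lemma degree_fin_two (d : Fin 2 →₀ ℕ) : d.degree = d 0 + d 1 := by
  simp [Finsupp.degree_eq_sum, Fin.sum_univ_two]

lemma degree_degExp (i : Fin (n + 1)) : (degExp n i).degree = n := by
  rw [degree_fin_two, degExp_apply_zero, degExp_apply_one]; omega

lemma exists_degExp_of_degree_eq {d : Fin 2 →₀ ℕ} (hd : d.degree = n) :
    ∃ i, degExp n i = d := by
  rw [degree_fin_two] at hd
  refine ⟨⟨d 1, by omega⟩, Finsupp.ext fun j => ?_⟩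
  fin_cases j <;> simp; omega

lemma monomial_degExp (i : Fin (n + 1)) (a : ℝ) :
    monomial (degExp n i) a = C a * X 0 ^ (n - i : ℕ) * X 1 ^ (i : ℕ) := by
  rw [mul_assoc, X_pow_eq_monomial, X_pow_eq_monomial, monomial_mul, one_mul, C_mul_monomial,
    mul_one, degExp]

lemma MvPolynomial.IsHomogeneous.support_subset_image_degExp {p : MvPolynomial (Fin 2) ℝ}
    (hp : p.IsHomogeneous n) : p.support ⊆ univ.image (degExp n) := fun d hd => by
  obtain ⟨i, rfl⟩ := exists_degExp_of_degree_eq <|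
    by_contra fun h => mem_support_iff.mp hd (hp.coeff_eq_zero h)
  exact mem_image_of_mem _ (mem_univ i)

lemma MvPolynomial.IsHomogeneous.eq_sum_monomial_degExp {p : MvPolynomial (Fin 2) ℝ}
    (hp : p.IsHomogeneous n) :
    p = ∑ i, monomial (degExp n i) (coeff (degExp n i) p) := by
  conv_lhs => rw [p.as_sum]
  rw [sum_subset hp.support_subset_image_degExp fun d _ hd => by
    rw [notMem_support_iff.mp hd, monomial_zero], sum_image fun i _ j _ h => degExp_injective n h]

lemma coeff_degExp_sum_monomial (b : Fin (n + 1) → ℝ) (i : Fin (n + 1)) :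
    coeff (degExp n i) (∑ j, monomial (degExp n j) (b j)) = b i := by
  simp [coeff_sum, coeff_monomial, (degExp_injective n).eq_iff]

lemma exists_coeff_degExp_eq_zero_of_card_support_le {h : MvPolynomial (Fin 2) ℝ}
    (hcard : h.support.card ≤ n) : ∃ i, coeff (degExp n i) h = 0 := by
  by_contra! hne
  have hsub : univ.image (degExp n) ⊆ h.support := by
    simpa [image_subset_iff] using hne
  have := card_le_card hsub
  rw [card_image_of_injective _ (degExp_injective n), card_univ, Fintype.card_fin] at this
  omega

end Exponents

lemma qform_eq_sum_monomial (b : Fin 5 → ℝ) :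
    qform b = ∑ i, monomial (degExp 4 i) ((Nat.choose 4 i : ℝ) * b i) := by
  simp only [qform, monomial_degExp]

lemma coeff_qform (b : Fin 5 → ℝ) (i : Fin 5) :
    coeff (degExp 4 i) (qform b) = Nat.choose 4 i * b i := by
  rw [qform_eq_sum_monomial, coeff_degExp_sum_monomial]

lemma choose_four_ne_zero (i : Fin 5) : (Nat.choose 4 i : ℝ) ≠ 0 :=
  Nat.cast_ne_zero.mpr (Nat.choose_pos (by omega)).ne'

lemma qform_injective : Function.Injective qform := fun b b' h => funext fun i =>
  mul_left_cancel₀ (choose_four_ne_zero i) <| by rw [← coeff_qform, h, coeff_qform]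

lemma MvPolynomial.IsHomogeneous.exists_qform_eq {p : MvPolynomial (Fin 2) ℝ}
    (hp : p.IsHomogeneous 4) : ∃ b, qform b = p := by
  refine ⟨fun i => coeff (degExp 4 i) p / Nat.choose 4 i, ?_⟩
  conv_rhs => rw [hp.eq_sum_monomial_degExp]
  simp only [qform_eq_sum_monomial, mul_div_cancel₀ _ (choose_four_ne_zero _)]

lemma isHomogeneous_qform (b : Fin 5 → ℝ) : (qform b).IsHomogeneous 4 := by
  rw [qform_eq_sum_monomial]
  exact IsHomogeneous.sum _ _ _ fun i _ => isHomogeneous_monomial _ (degree_degExp i)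

noncomputable def qformLinear : (Fin 5 → ℝ) →ₗ[ℝ] MvPolynomial (Fin 2) ℝ where
  toFun := qform
  map_add' b b' := by simp [qform_eq_sum_monomial, mul_add, sum_add_distrib]
  map_smul' c b := by simp [qform_eq_sum_monomial, smul_sum, smul_monomial, mul_left_comm]

lemma qform_smul (c : ℝ) (b : Fin 5 → ℝ) : qform (c • b) = c • qform b :=
  qformLinear.map_smul c b

lemma qform_single_zero : qform ![1, 0, 0, 0, 0] = X 0 ^ 4 := by
  simp [qform, Fin.sum_univ_five]

lemma qform_single_four : qform ![0, 0, 0, 0, 1] = X 1 ^ 4 := by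
  simp [qform, Fin.sum_univ_five]

lemma fischer4_qform (v w : Fin 5 → ℝ) :
    fischer4 (qform v) (qform w) =
      v 0 * w 0 + 4 * v 1 * w 1 + 6 * v 2 * w 2 + 4 * v 3 * w 3 + v 4 * w 4 := by
  have hsupp : (qform v).support ∪ (qform w).support ⊆ univ.image (degExp 4) :=
    union_subset (isHomogeneous_qform v).support_subset_image_degExp
      (isHomogeneous_qform w).support_subset_image_degExp
  rw [fischer4, sum_subset hsupp fun d _ hd => by
      rw [notMem_union, notMem_support_iff, notMem_support_iff] at hd; simp [hd.1],
    sum_image fun i _ j _ h => degExp_injective 4 h]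
  simp only [coeff_qform, Fin.prod_univ_two, degExp_apply_zero, degExp_apply_one]
  simp [Fin.sum_univ_five, Nat.factorial, Nat.choose]
  ring

noncomputable def binaryQuadratic (a b c : ℝ) : MvPolynomial (Fin 2) ℝ :=
  monomial (degExp 2 0) a + monomial (degExp 2 1) b + monomial (degExp 2 2) c

lemma MvPolynomial.IsHomogeneous.eq_binaryQuadratic {h : MvPolynomial (Fin 2) ℝ}
    (hh : h.IsHomogeneous 2) :
    h = binaryQuadratic (coeff (degExp 2 0) h) (coeff (degExp 2 1) h) (coeff (degExp 2 2) h) := by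
  conv_lhs => rw [hh.eq_sum_monomial_degExp]
  rw [Fin.sum_univ_three, binaryQuadratic]

lemma isHomogeneous_binaryQuadratic (a b c : ℝ) : (binaryQuadratic a b c).IsHomogeneous 2 :=
  ((isHomogeneous_monomial _ (degree_degExp _)).add
    (isHomogeneous_monomial _ (degree_degExp _))).add (isHomogeneous_monomial _ (degree_degExp _))

lemma card_support_monomial_add_monomial_le (d e : Fin 2 →₀ ℕ) (a b : ℝ) :
    (monomial d a + monomial e b).support.card ≤ 2 :=
  calc (monomial d a + monomial e b).support.card
      ≤ ((monomial d a).support ∪ (monomial e b).support).card := card_le_card support_add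
    _ ≤ 1 + 1 := (card_union_le _ _).trans <| add_le_add
        ((card_le_card support_monomial_subset).trans (card_singleton d).le)
        ((card_le_card support_monomial_subset).trans (card_singleton e).le)

lemma binaryQuadratic_sq (a b c : ℝ) :
    binaryQuadratic a b c ^ 2 =
      qform ![a ^ 2, a * b / 2, (b ^ 2 + 2 * a * c) / 6, b * c / 2, c ^ 2] := by
  apply MvPolynomial.funext
  intro x
  simp [binaryQuadratic, monomial_degExp, qform, Fin.sum_univ_five, Nat.choose]
  ring

lemma fischer4_qform_binaryQuadratic_sq (v : Fin 5 → ℝ) (a b c : ℝ) :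
    fischer4 (qform v) (binaryQuadratic a b c ^ 2) =
      v 0 * a ^ 2 + 2 * v 1 * a * b + v 2 * (b ^ 2 + 2 * a * c) + 2 * v 3 * b * c +
        v 4 * c ^ 2 := by
  rw [binaryQuadratic_sq, fischer4_qform]
  simp
  ring

/-- The three `2 × 2` principal submatrices of the Hankel matrix `(v (i + j))` are positive
semidefinite. -/
def hankelMinorCone : Set (Fin 5 → ℝ) :=
  { v | 0 ≤ v 0 ∧ 0 ≤ v 2 ∧ 0 ≤ v 4 ∧
      v 1 ^ 2 ≤ v 0 * v 2 ∧ v 3 ^ 2 ≤ v 2 * v 4 ∧ v 2 ^ 2 ≤ v 0 * v 4 }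

lemma qform_mem_dualSigma24_2_iff (v : Fin 5 → ℝ) :
    qform v ∈ DualSigma24_2 ↔ v ∈ hankelMinorCone := by
  have hpair := fischer4_qform_binaryQuadratic_sq v
  refine ⟨fun ⟨_, H⟩ => ?_, fun ⟨h0, h2, h4, h1, h3, hm⟩ =>
    ⟨isHomogeneous_qform v, fun h hh hcard => ?_⟩⟩
  · have hbinom : ∀ a b c, (a = 0 ∨ b = 0 ∨ c = 0) →
        0 ≤ fischer4 (qform v) (binaryQuadratic a b c ^ 2) := by
      rintro a b c (rfl | rfl | rfl) <;>
        refine H _ (isHomogeneous_binaryQuadratic _ _ _) ?_ <;>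
        simpa [binaryQuadratic] using card_support_monomial_add_monomial_le _ _ _ _
    obtain ⟨h0, h2, h1⟩ := (forall_quadratic_nonneg_iff (x := v 0) (y := v 1) (z := v 2)).mp
      fun a b => (hbinom a b 0 (by simp)).trans_eq (by rw [hpair]; ring)
    obtain ⟨-, h4, h3⟩ := (forall_quadratic_nonneg_iff (x := v 2) (y := v 3) (z := v 4)).mp
      fun b c => (hbinom 0 b c (by simp)).trans_eq (by rw [hpair]; ring)
    obtain ⟨-, -, hm⟩ := (forall_quadratic_nonneg_iff (x := v 0) (y := v 2) (z := v 4)).mp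
      fun a c => (hbinom a 0 c (by simp)).trans_eq (by rw [hpair]; ring)
    exact ⟨h0, h2, h4, h1, h3, hm⟩
  · suffices ∀ a b c, (a = 0 ∨ b = 0 ∨ c = 0) →
        0 ≤ fischer4 (qform v) (binaryQuadratic a b c ^ 2) by
      obtain ⟨i, hi⟩ := exists_coeff_degExp_eq_zero_of_card_support_le hcard
      rw [hh.eq_binaryQuadratic]
      exact this _ _ _ (by fin_cases i <;> simp_all)
    rintro a b c (rfl | rfl | rfl) <;> rw [hpair]
    · linarith [forall_quadratic_nonneg_iff.mpr ⟨h2, h4, h3⟩ b c]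
    · linarith [forall_quadratic_nonneg_iff.mpr ⟨h0, h4, hm⟩ a c]
    · linarith [forall_quadratic_nonneg_iff.mpr ⟨h0, h2, h1⟩ a b]

section HankelMinorCone

variable {v : Fin 5 → ℝ}

lemma smul_mem_hankelMinorCone {c : ℝ} (hc : 0 ≤ c) (hv : v ∈ hankelMinorCone) :
    c • v ∈ hankelMinorCone := by
  obtain ⟨h0, h2, h4, h1, h3, hm⟩ := hv
  simp only [hankelMinorCone, Set.mem_ofPred_eq, Pi.smul_apply, smul_eq_mul, mul_pow]
  refine ⟨by positivity, by positivity, by positivity, ?_, ?_, ?_⟩ <;>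
    nlinarith [sq_nonneg c]

lemma single_mem_hankelMinorCone {c : ℝ} (hc : 0 ≤ c) :
    c • ![1, 0, 0, 0, 0] ∈ hankelMinorCone ∧ c • ![0, 0, 0, 0, 1] ∈ hankelMinorCone := by
  simp [hankelMinorCone, hc]

lemma eq_zero_of_mem_hankelMinorCone_of_two_eq_zero (hK : v ∈ hankelMinorCone)
    (h2 : v 2 = 0) : v 1 = 0 ∧ v 3 = 0 := by
  obtain ⟨-, -, -, h1, h3, -⟩ := hK
  rw [h2] at h1 h3
  exact ⟨pow_eq_zero_iff two_ne_zero |>.mp (by nlinarith [sq_nonneg (v 1)]),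
    pow_eq_zero_iff two_ne_zero |>.mp (by nlinarith [sq_nonneg (v 3)])⟩

lemma IsExtremeRay.eq_smul_single_of_two_eq_zero (hv : IsExtremeRay ℝ hankelMinorCone v)
    (hK : v ∈ hankelMinorCone) (h2 : v 2 = 0) :
    ∃ c : ℝ, 0 < c ∧ (v = c • ![1, 0, 0, 0, 0] ∨ v = c • ![0, 0, 0, 0, 1]) := by
  obtain ⟨h1, h3⟩ := eq_zero_of_mem_hankelMinorCone_of_two_eq_zero hK h2
  obtain ⟨h0, -, h4, -⟩ := hK
  have hsplit : v = v 0 • ![1, 0, 0, 0, 0] + v 4 • ![0, 0, 0, 0, 1] := by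
    funext i; fin_cases i <;> simp [h1, h2, h3]
  obtain ⟨⟨k, -, hk⟩, -⟩ := hv.2 _ _ (single_mem_hankelMinorCone h0).1
    (single_mem_hankelMinorCone h4).2 hsplit
  rcases h0.eq_or_lt with h0 | h0
  · refine ⟨v 4, h4.lt_of_ne fun h4 => hv.1 ?_, Or.inr ?_⟩ <;> rw [hsplit, ← h0]
    · rw [← h4]; simp
    · simp
  · have hk1 : k = 1 := by simpa [h0.ne'] using congr_fun hk 0
    have h4 : v 4 = 0 := by simpa [hk1] using (congr_fun hk 4).symm
    exact ⟨v 0, h0, Or.inl (by rw [hsplit, h4]; simp)⟩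

lemma IsExtremeRay.eq_zero_of_add_mem_of_sub_mem (hv : IsExtremeRay ℝ hankelMinorCone v)
    (h0 : 0 < v 0) {w : Fin 5 → ℝ} (hw : w 0 = 0)
    (hadd : v + w ∈ hankelMinorCone) (hsub : v - w ∈ hankelMinorCone) : w = 0 := by
  obtain ⟨k, rfl⟩ := hv.exists_eq_smul_of_add_mem_of_sub_mem
    (fun c hc x hx => smul_mem_hankelMinorCone hc hx) hadd hsub
  obtain rfl : k = 0 := by simpa [h0.ne'] using hw
  exact zero_smul ℝ v

lemma IsExtremeRay.sq_one_eq (hv : IsExtremeRay ℝ hankelMinorCone v)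
    (hK : v ∈ hankelMinorCone) (h0 : 0 < v 0) : v 1 ^ 2 = v 0 * v 2 := by
  obtain ⟨-, h2, h4, h1, h3, hm⟩ := hK
  by_contra hne
  obtain ⟨δ, hδ, hadd, hsub⟩ := exists_pos_sq_le_of_sq_lt (lt_of_le_of_ne h1 hne)
  have := hv.eq_zero_of_add_mem_of_sub_mem h0 (w := ![0, δ, 0, 0, 0]) rfl
    (by simpa [hankelMinorCone] using ⟨h0.le, h2, h4, hadd, h3, hm⟩)
    (by simpa [hankelMinorCone, sub_eq_add_neg] using ⟨h0.le, h2, h4, hsub, h3, hm⟩)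
  simpa [hδ.ne'] using congr_fun this 1

lemma IsExtremeRay.sq_three_eq (hv : IsExtremeRay ℝ hankelMinorCone v)
    (hK : v ∈ hankelMinorCone) (h0 : 0 < v 0) : v 3 ^ 2 = v 2 * v 4 := by
  obtain ⟨-, h2, h4, h1, h3, hm⟩ := hK
  by_contra hne
  obtain ⟨δ, hδ, hadd, hsub⟩ := exists_pos_sq_le_of_sq_lt (lt_of_le_of_ne h3 hne)
  have := hv.eq_zero_of_add_mem_of_sub_mem h0 (w := ![0, 0, 0, δ, 0]) rfl
    (by simpa [hankelMinorCone] using ⟨h0.le, h2, h4, h1, hadd, hm⟩)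
    (by simpa [hankelMinorCone, sub_eq_add_neg] using ⟨h0.le, h2, h4, h1, hsub, hm⟩)
  simpa [hδ.ne'] using congr_fun this 3

lemma exists_eq_veronese_of_sq_eq (h0 : 0 < v 0) (h2 : 0 < v 2) (h4 : 0 < v 4)
    (hm : v 2 ^ 2 ≤ v 0 * v 4) (h1 : v 1 ^ 2 = v 0 * v 2) (h3 : v 3 ^ 2 = v 2 * v 4) :
    ∃ r s t ε₁ ε₂ : ℝ, 0 < r ∧ 0 < s ∧ 0 < t ∧ t ≤ √(r * s) ∧
      (ε₁ = 1 ∨ ε₁ = -1) ∧ (ε₂ = 1 ∨ ε₂ = -1) ∧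
      v = ![r ^ 2, ε₁ * r * t, t ^ 2, ε₂ * s * t, s ^ 2] := by
  have hr := Real.sq_sqrt h0.le
  have hs := Real.sq_sqrt h4.le
  have ht := Real.sq_sqrt h2.le
  obtain ⟨ε₁, hε₁, e₁⟩ := exists_sign_mul_of_sq_eq_sq (x := v 1) (y := √(v 0) * √(v 2))
    (by rw [mul_pow, hr, ht, h1])
  obtain ⟨ε₂, hε₂, e₃⟩ := exists_sign_mul_of_sq_eq_sq (x := v 3) (y := √(v 4) * √(v 2))
    (by rw [mul_pow, hs, ht, h3, mul_comm])
  refine ⟨√(v 0), √(v 4), √(v 2), ε₁, ε₂, by positivity, by positivity, by positivity, ?_,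
    hε₁, hε₂, ?_⟩
  · rw [← Real.sqrt_mul h0.le]
    exact Real.sqrt_le_sqrt ((Real.le_sqrt h2.le (by positivity)).mpr hm)
  · funext i
    fin_cases i <;> simp [hr, hs, ht, e₁, e₃, mul_assoc]

lemma isExtremeRay_smul_single_zero {c : ℝ} (hc : 0 < c) :
    IsExtremeRay ℝ hankelMinorCone (c • ![1, 0, 0, 0, 0]) := by
  refine isExtremeRay_of_forall_mul_eq 0 (by simpa) (fun a ha => ha.1) fun a b ha hb hab => ?_
  have hv := congr_fun hab
  simp only [Pi.add_apply, Pi.smul_apply, smul_eq_mul] at hv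
  have h2 : a 2 = 0 := ((add_eq_zero_iff_of_nonneg ha.2.1 hb.2.1).mp (by simpa using (hv 2).symm)).1
  have h4 : a 4 = 0 :=
    ((add_eq_zero_iff_of_nonneg ha.2.2.1 hb.2.2.1).mp (by simpa using (hv 4).symm)).1
  obtain ⟨h1, h3⟩ := eq_zero_of_mem_hankelMinorCone_of_two_eq_zero ha h2
  intro i
  fin_cases i <;> simp [h1, h2, h3, h4]

lemma isExtremeRay_smul_single_four {c : ℝ} (hc : 0 < c) :
    IsExtremeRay ℝ hankelMinorCone (c • ![0, 0, 0, 0, 1]) := by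
  refine isExtremeRay_of_forall_mul_eq 4 (by simpa) (fun a ha => ha.2.2.1)
    fun a b ha hb hab => ?_
  have hv := congr_fun hab
  simp only [Pi.add_apply, Pi.smul_apply, smul_eq_mul] at hv
  have h2 : a 2 = 0 := ((add_eq_zero_iff_of_nonneg ha.2.1 hb.2.1).mp (by simpa using (hv 2).symm)).1
  have h0 : a 0 = 0 := ((add_eq_zero_iff_of_nonneg ha.1 hb.1).mp (by simpa using (hv 0).symm)).1
  obtain ⟨h1, h3⟩ := eq_zero_of_mem_hankelMinorCone_of_two_eq_zero ha h2
  intro i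
  fin_cases i <;> simp [h0, h1, h2, h3]

lemma isExtremeRay_of_sq_eq (h2 : 0 < v 2) (h1 : v 1 ^ 2 = v 0 * v 2)
    (h3 : v 3 ^ 2 = v 2 * v 4) : IsExtremeRay ℝ hankelMinorCone v := by
  refine isExtremeRay_of_forall_mul_eq 2 h2 (fun a ha => ha.2.1) fun a b ha hb hab => ?_
  obtain ⟨ha0, ha2, ha4, ha1, ha3, -⟩ := ha
  obtain ⟨hb0, hb2, hb4, hb1, hb3, -⟩ := hb
  have hv := congr_fun hab
  simp only [Pi.add_apply] at hv
  obtain ⟨e0, e1⟩ := proportional_of_psd_of_add_singular ha0 ha2 hb0 hb2 ha1 hb1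
    (by rw [← hv, ← hv, ← hv, h1])
  obtain ⟨e4, e3⟩ := proportional_of_psd_of_add_singular ha4 ha2 hb4 hb2 (a₁ := a 3) (b₁ := b 3)
    (by linarith) (by linarith) (by rw [← hv, ← hv, ← hv, h3, mul_comm])
  intro i
  fin_cases i <;> simp only [Fin.zero_eta, Fin.mk_one, Fin.reduceFinMk, hv]
  · linear_combination e0
  · linear_combination e1
  · linear_combination e3
  · linear_combination e4

lemma isExtremeRay_smul_veronese {c r s t ε₁ ε₂ : ℝ} (hc : 0 < c) (ht : t ≠ 0)
    (hε₁ : ε₁ ^ 2 = 1) (hε₂ : ε₂ ^ 2 = 1) :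
    IsExtremeRay ℝ hankelMinorCone (c • ![r ^ 2, ε₁ * r * t, t ^ 2, ε₂ * s * t, s ^ 2]) := by
  refine isExtremeRay_of_sq_eq (by simp; positivity) ?_ ?_ <;> simp
  · linear_combination (c * r * t) ^ 2 * hε₁
  · linear_combination (c * s * t) ^ 2 * hε₂

theorem isExtremeRay_hankelMinorCone_iff (hK : v ∈ hankelMinorCone) :
    IsExtremeRay ℝ hankelMinorCone v ↔ ∃ c : ℝ, 0 < c ∧
      (v = c • ![1, 0, 0, 0, 0] ∨ v = c • ![0, 0, 0, 0, 1] ∨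
        ∃ r s t ε₁ ε₂ : ℝ, 0 < r ∧ 0 < s ∧ 0 < t ∧ t ≤ √(r * s) ∧
          (ε₁ = 1 ∨ ε₁ = -1) ∧ (ε₂ = 1 ∨ ε₂ = -1) ∧
          v = c • ![r ^ 2, ε₁ * r * t, t ^ 2, ε₂ * s * t, s ^ 2]) := by
  refine ⟨fun hv => ?_, ?_⟩
  · obtain ⟨h0, h2, h4, -, -, hm⟩ := id hK
    rcases h2.eq_or_lt with h2 | h2
    · obtain ⟨c, hc, h⟩ := hv.eq_smul_single_of_two_eq_zero hK h2.symm
      exact ⟨c, hc, h.imp_right Or.inl⟩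
    have h0 : 0 < v 0 := h0.lt_of_ne fun h => by nlinarith
    have h4 : 0 < v 4 := h4.lt_of_ne fun h => by nlinarith
    obtain ⟨r, s, t, ε₁, ε₂, hr, hs, ht, hrst, hε₁, hε₂, rfl⟩ :=
      exists_eq_veronese_of_sq_eq h0 h2 h4 hm (hv.sq_one_eq hK h0) (hv.sq_three_eq hK h0)
    exact ⟨1, one_pos, Or.inr <| Or.inr
      ⟨r, s, t, ε₁, ε₂, hr, hs, ht, hrst, hε₁, hε₂, (one_smul _ _).symm⟩⟩
  · rintro ⟨c, hc, rfl | rfl | ⟨r, s, t, ε₁, ε₂, -, -, ht, -, hε₁, hε₂, rfl⟩⟩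
    · exact isExtremeRay_smul_single_zero hc
    · exact isExtremeRay_smul_single_four hc
    · exact isExtremeRay_smul_veronese hc ht.ne' (by rcases hε₁ with rfl | rfl <;> norm_num)
        (by rcases hε₂ with rfl | rfl <;> norm_num)

end HankelMinorCone

theorem extremal_elements_dual_sigma24_2 (p : MvPolynomial (Fin 2) ℝ)
    (hp : p ∈ DualSigma24_2) :
    (p ≠ 0 ∧ ∀ q₁ q₂ : MvPolynomial (Fin 2) ℝ,
        q₁ ∈ DualSigma24_2 → q₂ ∈ DualSigma24_2 → p = q₁ + q₂ →
        (∃ c₁ : ℝ, 0 ≤ c₁ ∧ q₁ = c₁ • p) ∧ (∃ c₂ : ℝ, 0 ≤ c₂ ∧ q₂ = c₂ • p)) ↔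
    (∃ c : ℝ, 0 < c ∧
      (p = c • (X 0 : MvPolynomial (Fin 2) ℝ) ^ 4 ∨
       p = c • (X 1 : MvPolynomial (Fin 2) ℝ) ^ 4 ∨
       ∃ r s t ε₁ ε₂ : ℝ, 0 < r ∧ 0 < s ∧ 0 < t ∧ t ≤ Real.sqrt (r * s) ∧
         (ε₁ = 1 ∨ ε₁ = -1) ∧ (ε₂ = 1 ∨ ε₂ = -1) ∧
         p = c • qform ![r ^ 2, ε₁ * r * t, t ^ 2, ε₂ * s * t, s ^ 2])) := by
  obtain ⟨b, rfl⟩ := hp.1.exists_qform_eq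
  change IsExtremeRay ℝ DualSigma24_2 (qformLinear b) ↔ _
  have hrange : DualSigma24_2 ⊆ Set.range qformLinear := fun p hp => hp.1.exists_qform_eq
  have hpre : qformLinear ⁻¹' DualSigma24_2 = hankelMinorCone :=
    Set.ext qform_mem_dualSigma24_2_iff
  rw [qformLinear.isExtremeRay_apply_iff qform_injective hrange, hpre,
    isExtremeRay_hankelMinorCone_iff ((qform_mem_dualSigma24_2_iff b).mp hp),
    ← qform_single_zero, ← qform_single_four]
  simp only [← qform_smul, qform_injective.eq_iff]
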